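/- For every link K, the minimal crossing number satisfies c(K) ≥ 2·g̃(K) + b(K) + |K| - 2 ≥ 2·g(K) + b(K) + |K| - 2, where g̃(K) is the canonical genus, g(K) the Seifert genus, and b(K) the braid index. -/
import Mathlib


/-- For every link K (diagrams modelled as a nonempty type ι with
data c(D) = 2·g(D) + s(D) + |K| - 2), with c(K) = min c(D), canonical genus
g̃(K) = min g(D), braid index b(K) = min s(D) (Yamada), and Seifert genus
g(K) ≤ g̃(K), we have c(K) ≥ 2·g̃(K) + b(K) + |K| - 2 ≥ 2·g(K) + b(K) + |K| - 2. -/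
theorem crossing_number_lower_bound
    {ι : Type*} [Nonempty ι]
    (c s g : ι → ℤ) (n cK gtilde bK gK : ℤ)
    (hrel : ∀ D, c D = 2 * g D + s D + n - 2)
    (hc : IsLeast (Set.range c) cK)
    (hg : IsLeast (Set.range g) gtilde)
    (hb : IsLeast (Set.range s) bK)
    (hgle : gK ≤ gtilde) :
    cK ≥ 2 * gtilde + bK + n - 2 ∧
      2 * gtilde + bK + n - 2 ≥ 2 * gK + bK + n - 2 := by
  obtain ⟨⟨D, hD⟩, -⟩ := hc
  have hgD : gtilde ≤ g D := hg.2 ⟨D, rfl⟩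
  have hsD : bK ≤ s D := hb.2 ⟨D, rfl⟩
  have := hrel D
  constructor <;> linarith
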